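/- Let C be a flag code of type (t_1,...,t_r) on F_q^n, let 1 ≤ i_1 < ... < i_M ≤ r, and suppose d_f(C) > D(i_1,...,i_M)^{(t,n)}, where D(i_1,...,i_M)^{(t,n)} = Σ_{j=1}^r min{2t_j, 2(n-t_j), 2|t_j - t_{i_1}|, ..., 2|t_j - t_{i_M}|}. Then the projection F ↦ (F_{i_1}, ..., F_{i_M}) is injective on C; in particular no two distinct flags of C share simultaneously their subspaces of dimensions t_{i_1},...,t_{i_M}. -/
import Mathlib


open Module Finset

/-- Subspace distance `d_S(U,V) = dim(U+V) - dim(U∩V)`. -/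
noncomputable def subDist {K : Type*} [Field K] {n : ℕ}
    (U V : Submodule K (Fin n → K)) : ℕ :=
  finrank K ↥(U ⊔ V) - finrank K ↥(U ⊓ V)

/-- Flag distance (flags indexed by `1, ..., r`). -/
noncomputable def flagDist {K : Type*} [Field K] {n : ℕ} (r : ℕ)
    (F F' : ℕ → Submodule K (Fin n → K)) : ℕ :=
  ∑ j ∈ Finset.Icc 1 r, subDist (F j) (F' j)

/-- `D(i_1,...,i_M)^{(t,n)} = Σ_{j=1}^r min{2t_j, 2(n-t_j), 2|t_j-t_{i_1}|, ..., 2|t_j-t_{i_M}|}`. -/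
def DmultiType (n r M : ℕ) (hM : 1 ≤ M) (t i : ℕ → ℕ) : ℕ :=
  ∑ j ∈ Finset.Icc 1 r,
    min (2 * t j) (min (2 * (n - t j))
      ((Finset.Icc 1 M).inf' (Finset.nonempty_Icc.mpr hM)
        (fun l => 2 * ((t j : ℤ) - (t (i l) : ℤ)).natAbs)))

theorem stmt14 {K : Type*} [Field K] [Fintype K] (n r M : ℕ) (hn : 2 ≤ n) (hr : 1 ≤ r)
    (hM : 1 ≤ M) (hMr : M ≤ r)
    (t : ℕ → ℕ) (ht1 : 1 ≤ t 1) (htr : t r < n)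
    (htmono : ∀ j, 1 ≤ j → j < r → t j < t (j + 1))
    (i : ℕ → ℕ) (hi1 : 1 ≤ i 1) (hiM : i M ≤ r)
    (himono : ∀ l, 1 ≤ l → l < M → i l < i (l + 1))
    (C : Set (ℕ → Submodule K (Fin n → K)))
    (hdim : ∀ F ∈ C, ∀ j, 1 ≤ j → j ≤ r → finrank K ↥(F j) = t j)
    (hnest : ∀ F ∈ C, ∀ j, 1 ≤ j → j < r → F j ≤ F (j + 1))
    -- the minimum distance of `C` is greater than `D(i_1,...,i_M)^{(t,n)}`,
    -- i.e. every pair of distinct flags of `C` is at distance `> D(i_1,...,i_M)^{(t,n)}`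
    (hd : ∀ F ∈ C, ∀ F' ∈ C, (∃ j, 1 ≤ j ∧ j ≤ r ∧ F j ≠ F' j) →
      DmultiType n r M hM t i < flagDist r F F') :
    -- the projection on positions `i_1, ..., i_M` is injective on `C`
    ∀ F ∈ C, ∀ F' ∈ C, (∀ l, 1 ≤ l → l ≤ M → F (i l) = F' (i l)) →
      ∀ j, 1 ≤ j → j ≤ r → F j = F' j := by
  intro F hF F' hF' hagree j hj1 hjr
  by_contra hne
  have hd' := hd F hF F' hF' ⟨j, hj1, hjr, hne⟩
  -- nestedness chain
  have hchain : ∀ G ∈ C, ∀ a b : ℕ, 1 ≤ a → a ≤ b → b ≤ r → G a ≤ G b := by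
    intro G hG a b ha
    induction b with
    | zero => intro hab _; omega
    | succ b ih =>
      intro hab hbr
      rcases Nat.lt_or_ge a (b + 1) with h | h
      · exact le_trans (ih (by omega) (by omega)) (hnest G hG b (by omega) (by omega))
      · have : a = b + 1 := by omega
        subst this; exact le_rfl
  have htmono' : ∀ a b : ℕ, 1 ≤ a → a ≤ b → b ≤ r → t a ≤ t b := by
    intro a b ha
    induction b with
    | zero => intro hab _; omega
    | succ b ih =>
      intro hab hbr
      rcases Nat.lt_or_ge a (b + 1) with h | h
      · exact le_trans (ih (by omega) (by omega)) (le_of_lt (htmono b (by omega) (by omega)))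
      · have : a = b + 1 := by omega
        subst this; exact le_rfl
  have himono' : ∀ a b : ℕ, 1 ≤ a → a ≤ b → b ≤ M → i a ≤ i b := by
    intro a b ha
    induction b with
    | zero => intro hab _; omega
    | succ b ih =>
      intro hab hbr
      rcases Nat.lt_or_ge a (b + 1) with h | h
      · exact le_trans (ih (by omega) (by omega)) (le_of_lt (himono b (by omega) (by omega)))
      · have : a = b + 1 := by omega
        subst this; exact le_rfl
  have hibnd : ∀ l : ℕ, 1 ≤ l → l ≤ M → 1 ≤ i l ∧ i l ≤ r := by
    intro l hl1 hlM
    exact ⟨le_trans hi1 (himono' 1 l le_rfl hl1 hlM),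
      le_trans (himono' l M hl1 hlM le_rfl) hiM⟩
  have hbound : flagDist r F F' ≤ DmultiType n r M hM t i := by
    unfold flagDist DmultiType
    apply Finset.sum_le_sum
    intro k hk
    rw [Finset.mem_Icc] at hk
    have hFk : finrank K ↥(F k) = t k := hdim F hF k hk.1 hk.2
    have hF'k : finrank K ↥(F' k) = t k := hdim F' hF' k hk.1 hk.2
    have hab : finrank K ↥(F k ⊔ F' k) + finrank K ↥(F k ⊓ F' k) = t k + t k := by
      rw [Submodule.finrank_sup_add_finrank_inf_eq, hFk, hF'k]
    have han : finrank K ↥(F k ⊔ F' k) ≤ n := by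
      have h := Submodule.finrank_le (F k ⊔ F' k)
      simpa using h
    have hbk : finrank K ↥(F k ⊓ F' k) ≤ t k := by
      rw [← hFk]
      exact Submodule.finrank_mono inf_le_left
    refine le_min ?_ (le_min ?_ ?_)
    · unfold subDist; omega
    · unfold subDist; omega
    · apply Finset.le_inf'
      intro l hl
      rw [Finset.mem_Icc] at hl
      obtain ⟨hil1, hilr⟩ := hibnd l hl.1 hl.2
      have hW : F (i l) = F' (i l) := hagree l hl.1 hl.2
      have hWdim : finrank K ↥(F (i l)) = t (i l) := hdim F hF _ hil1 hilr
      rcases Nat.le_total k (i l) with h | h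
      · have h1 : F k ≤ F (i l) := hchain F hF k (i l) hk.1 h hilr
        have h2 : F' k ≤ F (i l) := by
          rw [hW]; exact hchain F' hF' k (i l) hk.1 h hilr
        have ha : finrank K ↥(F k ⊔ F' k) ≤ t (i l) := by
          rw [← hWdim]; exact Submodule.finrank_mono (sup_le h1 h2)
        have htle : t k ≤ t (i l) := htmono' k (i l) hk.1 h hilr
        unfold subDist; omega
      · have h1 : F (i l) ≤ F k := hchain F hF (i l) k hil1 h hk.2
        have h2 : F (i l) ≤ F' k := by
          have := hchain F' hF' (i l) k hil1 h hk.2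
          rwa [← hW] at this
        have hb : t (i l) ≤ finrank K ↥(F k ⊓ F' k) := by
          rw [← hWdim]; exact Submodule.finrank_mono (le_inf h1 h2)
        have htle : t (i l) ≤ t k := htmono' (i l) k hil1 h hk.2
        unfold subDist; omega
  omega
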